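/- arXiv:2411.16578 — 5 statements merged into one kernel-verified Lean document; each statement's English description precedes it below -/
import Mathlib

section
/- A graph G has a vertex cover of size at most k if and only if the graph G-hat (same vertex and edge set, with every edge assigned weight 1) has a forest cover with weighted index at most k. -/
/-!
Every finite graph satisfies `|V| ≤ |E| + c`, where `c` counts connected components: deleting an
edge raises the number of components by at most one, and the edgeless graph has `|V|`
components. Hence a forest cover on `S` has weighted index at least `|S|`, and `S` is a vertex
cover; conversely a vertex cover `C` together with the edgeless forest on `C` has weighted index
at most `|C|`.
-/

namespace SimpleGraph

variable {V : Type*}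

theorem Reachable.deleteEdges_singleton_or {H : SimpleGraph V} {x y : V} (h : H.Reachable x y)
    (u v : V) :
    (H.deleteEdges {s(u, v)}).Reachable x y ∨ (H.deleteEdges {s(u, v)}).Reachable x u ∨
      (H.deleteEdges {s(u, v)}).Reachable x v := by
  obtain ⟨p⟩ := h
  induction p with
  | nil => exact .inl .rfl
  | @cons a b y hab q ih =>
    by_cases he : s(a, b) = s(u, v)
    · rcases Sym2.eq_iff.mp he with ⟨rfl, -⟩ | ⟨rfl, -⟩
      · exact .inr (.inl .rfl)
      · exact .inr (.inr .rfl)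
    · have hab' : (H.deleteEdges {s(u, v)}).Adj a b := by simp [hab, he]
      exact ih.imp (hab'.reachable.trans ·)
        (Or.imp (hab'.reachable.trans ·) (hab'.reachable.trans ·))

theorem card_connectedComponent_deleteEdges_le [Finite V] (H : SimpleGraph V) (u v : V) :
    Nat.card (H.deleteEdges {s(u, v)}).ConnectedComponent ≤
      Nat.card H.ConnectedComponent + 1 := by
  classical
  set H' := H.deleteEdges {s(u, v)}
  let φ := ConnectedComponent.map (Hom.ofLE (H.deleteEdges_le {s(u, v)}))
  -- Two components of `H'` merged in `H` both contain `u` or `v`; sending the one of `v` to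
  -- `none` separates them.
  have merged : ∀ c₁ c₂ : H'.ConnectedComponent, φ c₁ = φ c₂ →
      c₁ = c₂ ∨ c₁ = H'.connectedComponentMk u ∨ c₁ = H'.connectedComponentMk v := by
    intro c₁ c₂ hφ
    induction c₁ using ConnectedComponent.ind with | _ x =>
    induction c₂ using ConnectedComponent.ind with | _ y =>
    have hxy : H.Reachable x y := ConnectedComponent.exact hφ
    exact (hxy.deleteEdges_singleton_or u v).imp ConnectedComponent.sound
      (Or.imp ConnectedComponent.sound ConnectedComponent.sound)
  let f : H'.ConnectedComponent → Option H.ConnectedComponent := fun c =>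
    if c = H'.connectedComponentMk v then none else some (φ c)
  have hf : f.Injective := by
    intro c₁ c₂ hf
    by_cases h₁ : c₁ = H'.connectedComponentMk v <;>
      by_cases h₂ : c₂ = H'.connectedComponentMk v
    · rw [h₁, h₂]
    all_goals simp only [f, h₁, h₂, if_true, if_false, reduceCtorEq, Option.some.injEq] at hf
    rcases merged c₁ c₂ hf with h | h | h
    · exact h
    · rcases merged c₂ c₁ hf.symm with h' | h' | h'
      · exact h'.symm
      · exact h.trans h'.symm
      · exact absurd h' h₂
    · exact absurd h h₁
  simpa using Nat.card_le_card_of_injective f hf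

theorem card_le_card_edgeSet_add_card_connectedComponent [Finite V] (H : SimpleGraph V) :
    Nat.card V ≤ Nat.card H.edgeSet + Nat.card H.ConnectedComponent := by
  generalize hn : Nat.card H.edgeSet = n
  induction n generalizing H with
  | zero =>
    have hH : H = ⊥ := edgeSet_eq_empty.mp <| (Set.ncard_eq_zero (s := H.edgeSet)).mp <| by
      rwa [← Nat.card_coe_set_eq]
    subst hH
    simpa using Nat.card_le_card_of_injective _
      fun a b h => reachable_bot.mp (ConnectedComponent.exact h)
  | succ n ih =>
    obtain ⟨e, he⟩ : H.edgeSet.Nonempty :=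
      Set.nonempty_of_ncard_ne_zero (by rw [← Nat.card_coe_set_eq, hn]; omega)
    induction e using Sym2.ind with | _ u v =>
    have hcard : Nat.card (H.deleteEdges {s(u, v)}).edgeSet = n := by
      rw [Nat.card_coe_set_eq, edgeSet_deleteEdges, Set.ncard_sdiff_singleton_of_mem he,
        ← Nat.card_coe_set_eq, hn, Nat.add_sub_cancel]
    have hdel := ih _ hcard
    have hcomp := H.card_connectedComponent_deleteEdges_le u v
    omega

theorem card_edgeSet_induce_of_support_subset {F : SimpleGraph V} {s : Set V}
    (hs : F.support ⊆ s) : Nat.card (F.induce s).edgeSet = Nat.card F.edgeSet := by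
  refine Nat.card_eq_of_bijective (Embedding.induce s).mapEdgeSet
    ⟨(Embedding.induce s).mapEdgeSet.injective, ?_⟩
  rintro ⟨e, he⟩
  induction e using Sym2.ind with | _ u v =>
  exact ⟨⟨s(⟨u, hs ⟨v, he⟩⟩, ⟨v, hs ⟨u, he.symm⟩⟩), he⟩, rfl⟩

end SimpleGraph

open SimpleGraph

theorem stmt_2_general {V : Type} (G : SimpleGraph V) (k : ℕ) :
    (∃ C : Finset V, C.card ≤ k ∧ ∀ u v, G.Adj u v → u ∈ C ∨ v ∈ C) ↔
    (∃ (S : Finset V) (F : SimpleGraph V),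
      F ≤ G ∧ F.IsAcyclic ∧
      (∀ u v, F.Adj u v → u ∈ S ∧ v ∈ S) ∧
      (∀ u v, G.Adj u v → u ∈ S ∨ v ∈ S) ∧
      Nat.card F.edgeSet + Nat.card (F.induce (↑S : Set V)).ConnectedComponent ≤ k) := by
  constructor
  · rintro ⟨C, hCk, hcover⟩
    refine ⟨C, ⊥, bot_le, isAcyclic_bot, by simp, hcover, ?_⟩
    have hcomp :
        Nat.card ((⊥ : SimpleGraph V).induce (↑C : Set V)).ConnectedComponent ≤ C.card := by
      simpa using Nat.card_le_card_of_surjective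
        ((⊥ : SimpleGraph V).induce (↑C : Set V)).connectedComponentMk fun c => c.exists_rep
    simpa using hcomp.trans hCk
  · rintro ⟨S, F, -, -, hFS, hcover, hk⟩
    refine ⟨S, ?_, hcover⟩
    have hsupp : F.support ⊆ ↑S := fun u ⟨v, huv⟩ => (hFS u v huv).1
    have hS := card_le_card_edgeSet_add_card_connectedComponent (F.induce (↑S : Set V))
    rw [card_edgeSet_induce_of_support_subset hsupp, Nat.card_coe_set_eq,
      Set.ncard_coe_finset] at hS
    omega

/-- G has a vertex cover of size at most k iff the graph with every edge of
weight 1 has a forest cover with weighted index at most k.  A forest cover is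
an acyclic subgraph F on a vertex set S that is a vertex cover; with all
weights 1 its weighted index is (number of edges of F) + (number of connected
components of F on S). -/
theorem stmt_2 {V : Type} [Fintype V] (G : SimpleGraph V) (k : ℕ) :
    (∃ C : Finset V, C.card ≤ k ∧ ∀ u v, G.Adj u v → u ∈ C ∨ v ∈ C) ↔
    (∃ (S : Finset V) (F : SimpleGraph V),
      F ≤ G ∧ F.IsAcyclic ∧
      (∀ u v, F.Adj u v → u ∈ S ∧ v ∈ S) ∧
      (∀ u v, G.Adj u v → u ∈ S ∨ v ∈ S) ∧
      Nat.card F.edgeSet + Nat.card (F.induce (↑S : Set V)).ConnectedComponent ≤ k) :=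
  stmt_2_general G k
end

section
/- Let G = (V,E) be a graph with edge weights in {0,1}. Define V_0, E_0, V_1, G_1, k and maximum matching M as follows: E_0 is the weight-0 edges, V_0 the vertices incident to E_0, k the number of connected components of (V_0, E_0), V_1 = V \ V_0, G_1 the induced subgraph on V_1, M a maximum matching of G_1. Then the forest consisting of a spanning tree of each component of (V_0, E_0) together with the edges of M is a forest cover of G with weighted index k + 2|M|. -/
/-!
T lives on V_0 and the matching M on V_1, so T ⊔ M is a union of two graphs with disjoint
supports: its cycles lie in T or in M, and its components on V_0 ∪ V(M) are those of T (which
are those of (V_0, E_0)) together with those of M, one per matching edge. A matching is acyclic.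
Edges of T weigh 0, and edges of M weigh 1 since a weight-0 edge would have its ends in V_0.
Finally V_0 ∪ V(M) is a vertex cover: an edge avoiding it could be added to M inside G_1,
contradicting maximality.
-/

namespace SimpleGraph

variable {V β : Type*} {G A B H : SimpleGraph V}

theorem Reachable.apply_eq_of_forall_adj {f : V → β} (hadj : ∀ ⦃x y⦄, G.Adj x y → f x = f y)
    {u v : V} (h : G.Reachable u v) : f u = f v := by
  obtain ⟨p⟩ := h
  induction p with
  | nil => rfl
  | cons hux _ ih => exact (hadj hux).trans ih

noncomputable def ConnectedComponent.equivOfAdj (f : V → β)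
    (hadj : ∀ ⦃u v⦄, G.Adj u v → f u = f v) (hreach : ∀ ⦃u v⦄, f u = f v → G.Reachable u v)
    (hf : Function.Surjective f) : G.ConnectedComponent ≃ β :=
  Equiv.ofBijective
    (ConnectedComponent.lift f fun _ _ p _ => p.reachable.apply_eq_of_forall_adj hadj)
    ⟨fun c d => ConnectedComponent.ind₂ (fun _ _ h => ConnectedComponent.sound (hreach h)) c d,
      fun b => (hf b).elim fun v hv => ⟨G.connectedComponentMk v, hv⟩⟩

theorem reachable_induce_iff_of_support_subset {s : Set V} (hs : G.support ⊆ s) {u v : s} :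
    (G.induce s).Reachable u v ↔ G.Reachable u v := by
  refine ⟨fun h => h.map (Embedding.induce s).toHom, fun ⟨p⟩ => ?_⟩
  suffices ∀ {x y : V} (p : G.Walk x y) (hx : x ∈ s) (hy : y ∈ s),
      (G.induce s).Reachable ⟨x, hx⟩ ⟨y, hy⟩ from this p u.2 v.2
  intro x y p
  induction p with
  | nil => exact fun _ _ => .rfl
  | @cons x z y hxz p ih =>
    intro hx hy
    have hz : z ∈ s := hs ⟨x, hxz.symm⟩
    exact (show (G.induce s).Adj ⟨x, hx⟩ ⟨z, hz⟩ from hxz).reachable.trans (ih hz hy)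

noncomputable def connectedComponentInduceEquivOfReachableIff {s : Set V} (hG : G.support ⊆ s)
    (hH : H.support ⊆ s) (h : ∀ u v, G.Reachable u v ↔ H.Reachable u v) :
    (G.induce s).ConnectedComponent ≃ (H.induce s).ConnectedComponent :=
  ConnectedComponent.equivOfAdj (H.induce s).connectedComponentMk
    (fun u v huv => by
      rw [ConnectedComponent.eq, reachable_induce_iff_of_support_subset hH, ← h,
        ← reachable_induce_iff_of_support_subset hG]
      exact huv.reachable)
    (fun u v huv => by
      rwa [ConnectedComponent.eq, reachable_induce_iff_of_support_subset hH, ← h,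
        ← reachable_induce_iff_of_support_subset hG] at huv)
    Quot.mk_surjective

theorem Walk.edges_subset_edgeSet_left_of_le_sup (hH : H ≤ A ⊔ B)
    (hd : Disjoint A.support B.support) {u v : V} (p : H.Walk u v) (hu : u ∈ A.support) :
    ∀ e ∈ p.edges, e ∈ A.edgeSet := by
  induction p with
  | nil => simp
  | @cons u x v hux p ih =>
    have hA : A.Adj u x := (hH hux).resolve_right fun hB => hd.notMem_of_mem_left hu ⟨x, hB⟩
    simpa [hA] using ih ⟨u, hA.symm⟩

theorem IsAcyclic.sup_of_disjoint_support (hA : A.IsAcyclic) (hB : B.IsAcyclic)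
    (hd : Disjoint A.support B.support) : (A ⊔ B).IsAcyclic := by
  intro v p hp
  rcases p.adj_snd hp.not_nil with hvA | hvB
  · have hp' := p.edges_subset_edgeSet_left_of_le_sup le_rfl hd ⟨_, hvA⟩
    exact hA (p.transfer A hp') (hp.transfer hp')
  · have hp' := p.edges_subset_edgeSet_left_of_le_sup (sup_comm A B).le hd.symm ⟨_, hvB⟩
    exact hB (p.transfer B hp') (hp.transfer hp')

open Classical in
noncomputable def connectedComponentSupEquivOfDisjointSupport
    (hd : Disjoint A.support B.support) :
    ((A ⊔ B).induce (A.support ∪ B.support)).ConnectedComponent ≃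
      (A.induce A.support).ConnectedComponent ⊕ (B.induce B.support).ConnectedComponent :=
  ConnectedComponent.equivOfAdj
    (fun x => if hx : x.1 ∈ A.support then .inl (connectedComponentMk _ ⟨x, hx⟩)
      else .inr (connectedComponentMk _ ⟨x, x.2.resolve_left hx⟩))
    (by
      rintro ⟨x, hx⟩ ⟨y, hy⟩ (hxy | hxy)
      · have hxA : x ∈ A.support := ⟨y, hxy⟩
        have hyA : y ∈ A.support := ⟨x, hxy.symm⟩
        simp only [dif_pos hxA, dif_pos hyA]
        exact congrArg Sum.inl (ConnectedComponent.connectedComponentMk_eq_of_adj hxy)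
      · have hxA : x ∉ A.support := hd.notMem_of_mem_right ⟨y, hxy⟩
        have hyA : y ∉ A.support := hd.notMem_of_mem_right ⟨x, hxy.symm⟩
        simp only [dif_neg hxA, dif_neg hyA]
        exact congrArg Sum.inr (ConnectedComponent.connectedComponentMk_eq_of_adj hxy))
    (by
      have hsupp : (A ⊔ B).support ⊆ A.support ∪ B.support := by
        rintro x ⟨y, hxy | hxy⟩
        exacts [Or.inl ⟨y, hxy⟩, Or.inr ⟨y, hxy⟩]
      rintro ⟨x, hx⟩ ⟨y, hy⟩ hxy
      rw [reachable_induce_iff_of_support_subset hsupp]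
      by_cases hxA : x ∈ A.support <;> by_cases hyA : y ∈ A.support <;>
        simp only [dif_pos, dif_neg, hxA, hyA, reduceCtorEq, Sum.inl.injEq, Sum.inr.injEq,
          not_false_eq_true, ConnectedComponent.eq] at hxy
      · exact ((reachable_induce_iff_of_support_subset subset_rfl).1 hxy).mono le_sup_left
      · exact ((reachable_induce_iff_of_support_subset subset_rfl).1 hxy).mono le_sup_right)
    (by
      rintro (c | c)
      · induction c using ConnectedComponent.ind with
        | h v => exact ⟨⟨v, .inl v.2⟩, dif_pos v.2⟩
      · induction c using ConnectedComponent.ind with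
        | h v => exact ⟨⟨v, .inr v.2⟩, dif_neg (hd.notMem_of_mem_right v.2)⟩)

namespace Subgraph.IsMatching

variable {M : G.Subgraph}

theorem isAcyclic_spanningCoe (hM : M.IsMatching) : M.spanningCoe.IsAcyclic := by
  intro v p hp
  exact hp.snd_ne_penultimate <|
    hM.eq_of_adj_left (p.adj_snd hp.not_nil) (p.adj_penultimate hp.not_nil).symm

noncomputable def connectedComponentEquivEdgeSet (hM : M.IsMatching) :
    (M.spanningCoe.induce M.verts).ConnectedComponent ≃ M.edgeSet :=
  ConnectedComponent.equivOfAdj hM.toEdge (fun _ _ hxy => hM.toEdge_eq_toEdge_of_adj hxy)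
    (by
      rintro ⟨x, hx⟩ ⟨y, hy⟩ hxy
      obtain ⟨x', hxx', -⟩ := hM hx
      obtain ⟨y', hyy', -⟩ := hM hy
      rw [hM.toEdge_eq_of_adj hxx', hM.toEdge_eq_of_adj hyy'] at hxy
      rcases Sym2.eq_iff.1 (congrArg Subtype.val hxy) with ⟨rfl, -⟩ | ⟨rfl, rfl⟩
      · rfl
      · exact Adj.reachable (G := M.spanningCoe.induce M.verts) hxx')
    (IsMatching.toEdge.surjective hM)

theorem mem_or_mem_of_forall_card_le [Finite V] {X : Set V}
    (hM : M.IsMatching) (hMX : ∀ v ∈ M.verts, v ∉ X)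
    (hmax : ∀ M' : G.Subgraph, M'.IsMatching → (∀ v ∈ M'.verts, v ∉ X) →
      Nat.card M'.edgeSet ≤ Nat.card M.edgeSet)
    {u v : V} (huv : G.Adj u v) : u ∈ X ∪ M.verts ∨ v ∈ X ∪ M.verts := by
  by_contra! h
  simp only [Set.mem_union, not_or] at h
  obtain ⟨⟨huX, huM⟩, hvX, hvM⟩ := h
  set M' := M ⊔ G.subgraphOfAdj huv
  have hM' : M'.IsMatching := by
    refine hM.sup (.subgraphOfAdj huv) (Set.disjoint_left.2 fun x hxM hx => ?_)
    rcases (G.subgraphOfAdj huv).support_subset_verts hx with rfl | rfl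
    exacts [huM (M.support_subset_verts hxM), hvM (M.support_subset_verts hxM)]
  have hM'X : ∀ x ∈ M'.verts, x ∉ X := by
    rintro x (hx | rfl | rfl)
    exacts [hMX x hx, huX, hvX]
  have hcard : Nat.card M'.edgeSet = Nat.card M.edgeSet + 1 := by
    rw [Nat.card_coe_set_eq, Nat.card_coe_set_eq, Subgraph.edgeSet_sup, edgeSet_subgraphOfAdj,
      Set.union_singleton,
      Set.ncard_insert_of_notMem (show s(u, v) ∉ M.edgeSet from fun h => huM (M.edge_vert h))]
  have := hmax M' hM' hM'X
  omega

end Subgraph.IsMatching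

end SimpleGraph

open SimpleGraph

/-- Binary edge weights: the forest consisting of a spanning tree T of each
component of (V_0, E_0) together with the edges of a maximum matching M of the
induced subgraph on V_1 is a forest cover of G with weighted index k + 2|M|. -/
theorem stmt_4 {V : Type} [Fintype V] (G : SimpleGraph V) (w : Sym2 V → ℕ)
    (hw : ∀ e, w e = 0 ∨ w e = 1)
    (G0 : SimpleGraph V) (hG0 : ∀ u v, G0.Adj u v ↔ (G.Adj u v ∧ w s(u, v) = 0))
    (k : ℕ) (hk : k = Nat.card (G0.induce G0.support).ConnectedComponent)
    -- T is a spanning tree of each component of (V_0, E_0):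
    (T : SimpleGraph V) (hTle : T ≤ G0) (hTacyc : T.IsAcyclic)
    (hTsupp : T.support = G0.support)
    (hTreach : ∀ u v, G0.Reachable u v ↔ T.Reachable u v)
    -- M is a maximum matching of the induced subgraph on V_1 = V \ V_0:
    (M : G.Subgraph) (hMmatch : M.IsMatching)
    (hMV1 : ∀ v ∈ M.verts, v ∉ G0.support)
    (hMmax : ∀ M' : G.Subgraph, M'.IsMatching → (∀ v ∈ M'.verts, v ∉ G0.support) →
      Nat.card M'.edgeSet ≤ Nat.card M.edgeSet) :
    -- the forest F = T ⊔ M with vertex set S = V_0 ∪ verts(M) is a forest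
    -- cover of G with weighted index k + 2|M|:
    (T ⊔ M.spanningCoe) ≤ G ∧ (T ⊔ M.spanningCoe).IsAcyclic ∧
    (∀ u v, (T ⊔ M.spanningCoe).Adj u v →
      u ∈ G0.support ∪ M.verts ∧ v ∈ G0.support ∪ M.verts) ∧
    (∀ u v, G.Adj u v → u ∈ G0.support ∪ M.verts ∨ v ∈ G0.support ∪ M.verts) ∧
    Nat.card {e : Sym2 V // e ∈ (T ⊔ M.spanningCoe).edgeSet ∧ w e = 1} +
        Nat.card ((T ⊔ M.spanningCoe).induce (G0.support ∪ M.verts)).ConnectedComponent =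
      k + 2 * Nat.card M.edgeSet := by
  have hMsupp : M.spanningCoe.support = M.verts := hMmatch.support_eq_verts
  have hdisj : Disjoint T.support M.spanningCoe.support := by
    rw [hTsupp, hMsupp]
    exact Set.disjoint_right.2 hMV1
  have hweight : ∀ e, e ∈ (T ⊔ M.spanningCoe).edgeSet ∧ w e = 1 ↔ e ∈ M.edgeSet := by
    intro e
    induction e using Sym2.ind with
    | h u v =>
      refine ⟨fun ⟨huv, hw1⟩ => huv.resolve_left fun hT => ?_,
        fun huv => ⟨Or.inr huv, (hw _).resolve_left fun hw0 => ?_⟩⟩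
      · simp [((hG0 u v).1 (hTle hT)).2] at hw1
      · exact hMV1 u (M.edge_vert huv) ⟨v, (hG0 u v).2 ⟨M.adj_sub huv, hw0⟩⟩
  have hcomponents :
      Nat.card ((T ⊔ M.spanningCoe).induce (G0.support ∪ M.verts)).ConnectedComponent =
        k + Nat.card M.edgeSet := by
    rw [← hTsupp, ← hMsupp, Nat.card_congr (connectedComponentSupEquivOfDisjointSupport hdisj),
      Nat.card_sum, hMsupp, Nat.card_congr hMmatch.connectedComponentEquivEdgeSet, hTsupp, hk,
      Nat.card_congr (connectedComponentInduceEquivOfReachableIff hTsupp.le le_rfl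
        (fun u v => (hTreach u v).symm))]
  refine ⟨sup_le (hTle.trans fun _ _ h => ((hG0 _ _).1 h).1) M.spanningCoe_le,
    hTacyc.sup_of_disjoint_support hMmatch.isAcyclic_spanningCoe hdisj, ?_,
    fun u v => hMmatch.mem_or_mem_of_forall_card_le hMV1 hMmax, ?_⟩
  · rintro u v (huv | huv)
    · exact ⟨.inl (hTsupp ▸ ⟨v, huv⟩), .inl (hTsupp ▸ ⟨u, huv.symm⟩)⟩
    · exact ⟨.inr (M.edge_vert huv), .inr (M.edge_vert huv.symm)⟩
  · rw [Nat.card_congr (Equiv.subtypeEquivRight hweight), hcomponents]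
    ring
end

section
/- For a graph with binary edge weights, the forest cover constructed from spanning trees of the weight-0 components plus a maximum matching on the remaining vertices has weighted index at most twice the minimum weighted index of any forest cover. -/
/-!
Let `S` be a vertex cover of `G` and `F ≤ G` a forest on `S`; its weighted index is
`|E(F)| - |E(F₀)| + c(F[S])`, where `F₀` is the forest of weight-0 edges of `F`. With `V₀` the
vertices incident to weight-0 edges, `F₀` lives on `A = S ∩ V₀`.
A finite graph has at least as many edges plus components as vertices, with equality for forests,
so `|S| ≤ |E(F)| + c(F[S])` and `|E(F₀)| + c(F₀[A]) = |A|`. Since `S` covers every weight-0 edge,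
each component of `(V₀, E₀)` meets `A`, so `k ≤ c(F₀[A])`; since `S` covers `M` and `M` avoids
`V₀`, `|M| ≤ |S \ V₀| = |S| - |A|`. Adding up, `k + |M|` is at most the weighted index of `F`,
and `k + 2|M| ≤ 2(k + |M|)`.
-/

namespace SimpleGraph

variable {V : Type*} (H : SimpleGraph V)

theorem natCard_edgeSet_eq_sum_induce_supp [Fintype H.ConnectedComponent] [Finite V] :
    Nat.card H.edgeSet = ∑ c : H.ConnectedComponent, Nat.card (H.induce c.supp).edgeSet := by
  rw [← Nat.card_sigma]
  symm
  refine Nat.card_eq_of_bijective (fun e => ⟨e.2.1.map Subtype.val,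
    (Embedding.induce e.1.supp).map_mem_edgeSet_iff.mpr e.2.2⟩) ⟨?_, ?_⟩
  · rintro ⟨c₁, ⟨e₁, he₁⟩⟩ ⟨c₂, ⟨e₂, he₂⟩⟩ h
    replace h : e₁.map Subtype.val = e₂.map Subtype.val := congrArg Subtype.val h
    obtain ⟨x, hx⟩ : ∃ x, x ∈ e₁ := ⟨_, Sym2.out_fst_mem e₁⟩
    have hmem : x.1 ∈ e₂.map Subtype.val := by
      rw [← h]; exact Sym2.mem_map.mpr ⟨x, hx, rfl⟩
    obtain ⟨y, -, hyx⟩ := Sym2.mem_map.mp hmem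
    obtain rfl : c₁ = c₂ := by rw [← x.2, ← y.2, hyx]
    obtain rfl : e₁ = e₂ := Sym2.map.injective Subtype.val_injective h
    rfl
  · rintro ⟨e, he⟩
    induction e using Sym2.ind with
    | h u v =>
      have huv : H.connectedComponentMk v = H.connectedComponentMk u :=
        ConnectedComponent.sound (H.mem_edgeSet.mp he).symm.reachable
      exact ⟨⟨H.connectedComponentMk u, s(⟨u, rfl⟩, ⟨v, huv⟩), he⟩, rfl⟩

theorem natCard_eq_sum_natCard_supp [Fintype H.ConnectedComponent] [Finite V] :
    Nat.card V = ∑ c : H.ConnectedComponent, Nat.card c.supp := by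
  rw [← Nat.card_sigma]
  exact Nat.card_congr (Equiv.sigmaFiberEquiv H.connectedComponentMk).symm

theorem natCard_edgeSet_add_natCard_connectedComponent_eq_sum [Fintype H.ConnectedComponent]
    [Finite V] :
    Nat.card H.edgeSet + Nat.card H.ConnectedComponent =
      ∑ c : H.ConnectedComponent, (Nat.card (H.induce c.supp).edgeSet + 1) := by
  rw [Finset.sum_add_distrib, ← natCard_edgeSet_eq_sum_induce_supp, Finset.sum_const,
    smul_eq_mul, mul_one, Finset.card_univ, Nat.card_eq_fintype_card (α := H.ConnectedComponent)]

theorem natCard_le_natCard_edgeSet_add_natCard_connectedComponent [Finite V] :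
    Nat.card V ≤ Nat.card H.edgeSet + Nat.card H.ConnectedComponent := by
  have := Fintype.ofFinite H.ConnectedComponent
  rw [H.natCard_eq_sum_natCard_supp, H.natCard_edgeSet_add_natCard_connectedComponent_eq_sum]
  exact Finset.sum_le_sum fun c _ => c.connected_toSimpleGraph.card_vert_le_card_edgeSet_add_one

theorem IsAcyclic.natCard_edgeSet_add_natCard_connectedComponent [Finite V] (hH : H.IsAcyclic) :
    Nat.card H.edgeSet + Nat.card H.ConnectedComponent = Nat.card V := by
  have := Fintype.ofFinite H.ConnectedComponent
  rw [H.natCard_eq_sum_natCard_supp, H.natCard_edgeSet_add_natCard_connectedComponent_eq_sum]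
  exact Finset.sum_congr rfl fun c _ =>
    (isTree_iff_connected_and_card.mp (hH.isTree_connectedComponent c)).2

theorem natCard_edgeSet_induce_of_support_subset [Finite V] {s : Set V} (h : H.support ⊆ s) :
    Nat.card (H.induce s).edgeSet = Nat.card H.edgeSet := by
  classical
  have := Fintype.ofFinite V
  simpa only [Nat.card_eq_fintype_card, edgeFinset_card] using
    card_edgeFinset_induce_of_support_subset h

theorem natCard_connectedComponent_induce_le {H K : SimpleGraph V} (hKH : K ≤ H) {A B : Set V}
    [Finite A] (hAB : A ⊆ B) (hB : ∀ v ∈ B, v ∈ A ∨ ∃ u ∈ A, H.Adj v u) :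
    Nat.card (H.induce B).ConnectedComponent ≤ Nat.card (K.induce A).ConnectedComponent := by
  refine Nat.card_le_card_of_surjective
    (ConnectedComponent.map (induceHom (Hom.ofLE hKH) fun _ hv => hAB hv)) ?_
  intro c
  induction c using ConnectedComponent.ind with
  | h v =>
    obtain ⟨v, hv⟩ := v
    rcases hB v hv with hvA | ⟨u, huA, hvu⟩
    · exact ⟨K.induce A |>.connectedComponentMk ⟨v, hvA⟩, rfl⟩
    · refine ⟨K.induce A |>.connectedComponentMk ⟨u, huA⟩, ConnectedComponent.sound ?_⟩
      exact Adj.reachable (G := H.induce B) (u := ⟨u, hAB huA⟩) (v := ⟨v, hv⟩) hvu.symm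

theorem Subgraph.IsMatching.natCard_edgeSet_le_natCard_inter_verts {G : SimpleGraph V}
    {M : G.Subgraph} (hM : M.IsMatching) {T : Set V} [Finite T]
    (hT : ∀ u v, M.Adj u v → u ∈ T ∨ v ∈ T) :
    Nat.card M.edgeSet ≤ Nat.card ↥(T ∩ M.verts) := by
  refine Nat.card_le_card_of_surjective (fun v => hM.toEdge ⟨v, v.2.2⟩) ?_
  rintro ⟨e, he⟩
  induction e using Sym2.ind with
  | h u v =>
    rcases hT u v he with hu | hv
    · exact ⟨⟨u, hu, he.fst_mem⟩, hM.toEdge_eq_of_adj he⟩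
    · refine ⟨⟨v, hv, he.snd_mem⟩, ?_⟩
      simp only [hM.toEdge_eq_of_adj he.symm, Sym2.eq_swap]

end SimpleGraph

theorem stmt_5_general {V : Type} [Fintype V] (G : SimpleGraph V) (w : Sym2 V → ℕ)
    (hw : ∀ e, w e = 0 ∨ w e = 1)
    (G0 : SimpleGraph V) (hG0 : ∀ u v, G0.Adj u v ↔ (G.Adj u v ∧ w s(u, v) = 0))
    (k : ℕ) (hk : k = Nat.card (G0.induce G0.support).ConnectedComponent)
    (M : G.Subgraph) (hMmatch : M.IsMatching)
    (hMV1 : ∀ v ∈ M.verts, v ∉ G0.support) :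
    ∀ (S : Finset V) (F : SimpleGraph V),
      F ≤ G → F.IsAcyclic →
      (∀ u v, F.Adj u v → u ∈ S ∧ v ∈ S) →
      (∀ u v, G.Adj u v → u ∈ S ∨ v ∈ S) →
      k + 2 * Nat.card M.edgeSet ≤
        2 * (Nat.card {e : Sym2 V // e ∈ F.edgeSet ∧ w e = 1} +
          Nat.card (F.induce (↑S : Set V)).ConnectedComponent) := by
  intro S F hFG hFac hFS hcov
  set A : Set V := ↑S ∩ G0.support
  set F0 := F.deleteEdges {e | w e = 1}
  have hF0G0 : F0 ≤ G0 := fun u v h => by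
    rw [SimpleGraph.deleteEdges_adj] at h
    exact (hG0 u v).mpr ⟨hFG h.1, (hw _).resolve_right h.2⟩
  have hF0A : F0.support ⊆ A := fun u ⟨v, h⟩ =>
    ⟨(hFS u v (F.deleteEdges_le _ h)).1, v, hF0G0 h⟩
  have hF : Nat.card (S : Set V) ≤
      Nat.card F.edgeSet + Nat.card (F.induce S).ConnectedComponent := by
    rw [← F.natCard_edgeSet_induce_of_support_subset (s := S) fun u ⟨v, h⟩ => (hFS u v h).1]
    exact (F.induce S).natCard_le_natCard_edgeSet_add_natCard_connectedComponent
  have hF0 : Nat.card F0.edgeSet + Nat.card (F0.induce A).ConnectedComponent = Nat.card A := by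
    rw [← F0.natCard_edgeSet_induce_of_support_subset hF0A]
    exact ((hFac.anti (F.deleteEdges_le _)).induce A).natCard_edgeSet_add_natCard_connectedComponent
  have hkF0 : k ≤ Nat.card (F0.induce A).ConnectedComponent := by
    refine hk ▸ SimpleGraph.natCard_connectedComponent_induce_le hF0G0 Set.inter_subset_right ?_
    rintro v ⟨u, hvu⟩
    rcases hcov v u ((hG0 v u).mp hvu).1 with hv | hu
    · exact .inl ⟨hv, u, hvu⟩
    · exact .inr ⟨u, ⟨hu, v, hvu.symm⟩, hvu⟩
  have hM : Nat.card M.edgeSet ≤ Nat.card ↥(↑S \ G0.support : Set V) :=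
    (hMmatch.natCard_edgeSet_le_natCard_inter_verts (T := S) fun u v h =>
      hcov u v (M.adj_sub h)).trans <|
      Nat.card_mono (Set.toFinite _) fun v ⟨hvS, hvM⟩ => ⟨hvS, hMV1 v hvM⟩
  have hFw : Nat.card F0.edgeSet + Nat.card {e : Sym2 V // e ∈ F.edgeSet ∧ w e = 1} =
      Nat.card F.edgeSet := by
    rw [SimpleGraph.edgeSet_deleteEdges, Nat.card_coe_set_eq, Nat.card_coe_set_eq, add_comm,
      ← Set.ncard_inter_add_ncard_sdiff_eq_ncard F.edgeSet {e | w e = 1}]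
    exact congrArg (· + _) (Nat.card_coe_set_eq (F.edgeSet ∩ {e | w e = 1}))
  have hS : Nat.card A + Nat.card ↥(↑S \ G0.support : Set V) = Nat.card (S : Set V) := by
    simp only [Nat.card_coe_set_eq]
    exact Set.ncard_inter_add_ncard_sdiff_eq_ncard _ _
  omega

/-- Binary edge weights: the forest cover constructed from spanning trees of
the weight-0 components plus a maximum matching on the remaining vertices has
weighted index k + 2|M|, which is at most twice the weighted index of any
forest cover of G. -/
theorem stmt_5 {V : Type} [Fintype V] (G : SimpleGraph V) (w : Sym2 V → ℕ)
    (hw : ∀ e, w e = 0 ∨ w e = 1)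
    (G0 : SimpleGraph V) (hG0 : ∀ u v, G0.Adj u v ↔ (G.Adj u v ∧ w s(u, v) = 0))
    (k : ℕ) (hk : k = Nat.card (G0.induce G0.support).ConnectedComponent)
    (M : G.Subgraph) (hMmatch : M.IsMatching)
    (hMV1 : ∀ v ∈ M.verts, v ∉ G0.support)
    (hMmax : ∀ M' : G.Subgraph, M'.IsMatching → (∀ v ∈ M'.verts, v ∉ G0.support) →
      Nat.card M'.edgeSet ≤ Nat.card M.edgeSet) :
    ∀ (S : Finset V) (F : SimpleGraph V),
      F ≤ G → F.IsAcyclic →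
      (∀ u v, F.Adj u v → u ∈ S ∧ v ∈ S) →
      (∀ u v, G.Adj u v → u ∈ S ∨ v ∈ S) →
      k + 2 * Nat.card M.edgeSet ≤
        2 * (Nat.card {e : Sym2 V // e ∈ F.edgeSet ∧ w e = 1} +
          Nat.card (F.induce (↑S : Set V)).ConnectedComponent) :=
  stmt_5_general G w hw G0 hG0 k hk M hMmatch hMV1
end

section
/- In a tree where every vertex of a subset A has degree at least 2, every subset X of A satisfies |N(X)| >= |X|, where N(X) is the set of neighbors of vertices in X outside A (assuming A is independent). -/
/-! Root the tree at any vertex. A vertex of degree at least 2 has at most one neighbour closer to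
the root, hence a child, and a child has a unique parent; so choosing a child for each vertex of `X`
injects `X` into its neighbourhood. -/

open Finset

namespace SimpleGraph

variable {V : Type*} {G : SimpleGraph V}

lemma IsAcyclic.eq_of_adj_of_dist_add_one (hG : G.IsAcyclic) {u v w c : V}
    (hv : G.Adj v c) (hw : G.Adj w c)
    (hvc : G.dist u v + 1 = G.dist u c) (hwc : G.dist u w + 1 = G.dist u c) : v = w := by
  have hreach : G.Reachable u c := .of_dist_ne_zero (by omega)
  obtain ⟨p, -, hp⟩ := (hreach.trans hv.symm.reachable).exists_path_of_dist
  obtain ⟨q, -, hq⟩ := (hreach.trans hw.symm.reachable).exists_path_of_dist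
  have hpc : (p.concat hv).IsPath := Walk.isPath_of_length_eq_dist _ (by simp [hp, hvc])
  have hqc : (q.concat hw).IsPath := Walk.isPath_of_length_eq_dist _ (by simp [hq, hwc])
  have hpq : p.concat hv = q.concat hw :=
    congrArg Subtype.val ((hG.subsingleton_path u c).elim ⟨_, hpc⟩ ⟨_, hqc⟩)
  exact (Walk.concat_inj hpq).1

lemma IsAcyclic.exists_adj_dist_eq_add_one (hG : G.IsAcyclic) {u v : V}
    (hreach : G.Reachable u v) [Fintype (G.neighborSet v)] (hdeg : 2 ≤ G.degree v) :
    ∃ w, G.Adj v w ∧ G.dist u w = G.dist u v + 1 := by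
  obtain ⟨a, ha, b, hb, hab⟩ :=
    one_lt_card.mp (show 1 < #(G.neighborFinset v) by rwa [card_neighborFinset_eq_degree])
  rw [mem_neighborFinset] at ha hb
  by_contra! hfar
  have hcloser : ∀ x, G.Adj v x → G.dist u x + 1 = G.dist u v := fun x hx =>
    (hG.dist_eq_dist_add_one_of_adj_of_reachable u hx hreach).resolve_right (hfar x hx) |>.symm
  exact hab (hG.eq_of_adj_of_dist_add_one ha.symm hb.symm (hcloser a ha) (hcloser b hb))

end SimpleGraph

theorem stmt_15_general {V : Type} [Fintype V] [DecidableEq V]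
    (T : SimpleGraph V) [DecidableRel T.Adj]
    (hconn : T.Connected) (hacyc : T.IsAcyclic)
    (A : Finset V)
    (hdeg : ∀ v ∈ A, 2 ≤ T.degree v) :
    ∀ X ⊆ A, X.card ≤ (X.biUnion (fun v => T.neighborFinset v)).card := by
  intro X hXA
  obtain ⟨r⟩ := hconn.nonempty
  choose! child hchild_adj hchild_dist using fun v (hv : v ∈ X) =>
    hacyc.exists_adj_dist_eq_add_one (hconn r v) (hdeg v (hXA hv))
  refine card_le_card_of_injOn child (fun v hv => ?_) (fun v hv w hw hvw => ?_)
  · exact mem_biUnion.mpr ⟨v, hv, (SimpleGraph.mem_neighborFinset _ _ _).mpr (hchild_adj v hv)⟩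
  · exact hacyc.eq_of_adj_of_dist_add_one (u := r) (hchild_adj v hv) (hvw ▸ hchild_adj w hw)
      (hchild_dist v hv).symm (hvw ▸ (hchild_dist w hw).symm)

/-- In a tree T, if A is an independent set in which every vertex has degree at
least 2, then every subset X of A satisfies Hall's condition |N(X)| ≥ |X|,
where N(X) is the set of neighbors of vertices of X. -/
theorem stmt_15 {V : Type} [Fintype V] [DecidableEq V]
    (T : SimpleGraph V) [DecidableRel T.Adj]
    (hconn : T.Connected) (hacyc : T.IsAcyclic)
    (A : Finset V)
    (hind : ∀ u ∈ A, ∀ v ∈ A, ¬ T.Adj u v)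
    (hdeg : ∀ v ∈ A, 2 ≤ T.degree v) :
    ∀ X ⊆ A, X.card ≤ (X.biUnion (fun v => T.neighborFinset v)).card :=
  stmt_15_general T hconn hacyc A hdeg
end

section
/- Let e_1,...,e_n be a sequence of edges with nondecreasing nonnegative weights w_1 <= ... <= w_n, and associated nonnegative coefficients c_1,...,c_n where index 1 carries a 'negative' coefficient. If for every prefix the signed weighted sum c_1 w_1 >= sum_{1 < k <= r} c_k w_k holds (the running sum stays nonpositive), then the unweighted inequality c_1 >= sum_{1 < k <= n} c_k also holds. -/
theorem Finset.sum_le_of_sum_mul_le_mul_of_le {ι α : Type*} [Field α] [LinearOrder α]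
    [IsStrictOrderedRing α] {s : Finset ι} {c w : ι → α} {b m : α} (hm : 0 < m)
    (hc : ∀ k ∈ s, 0 ≤ c k) (hw : ∀ k ∈ s, m ≤ w k) (h : ∑ k ∈ s, c k * w k ≤ b * m) :
    ∑ k ∈ s, c k ≤ b := by
  refine le_of_mul_le_mul_right ?_ hm
  calc (∑ k ∈ s, c k) * m = ∑ k ∈ s, c k * m := Finset.sum_mul ..
    _ ≤ ∑ k ∈ s, c k * w k :=
        Finset.sum_le_sum fun k hk => mul_le_mul_of_nonneg_left (hw k hk) (hc k hk)
    _ ≤ b * m := h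

theorem stmt_16_general (n : ℕ) (w c : ℕ → ℝ)
    (hwpos : 0 < w 1)
    (hmono : ∀ i j, 1 ≤ i → i ≤ j → j ≤ n → w i ≤ w j)
    (hc : ∀ k, 0 ≤ c k)
    (hprefix : ∀ r, r ≤ n → (∑ k ∈ Finset.Icc 2 r, c k * w k) ≤ c 1 * w 1) :
    (∑ k ∈ Finset.Icc 2 n, c k) ≤ c 1 := by
  refine Finset.sum_le_of_sum_mul_le_mul_of_le hwpos (fun k _ => hc k) ?_ (hprefix n le_rfl)
  intro k hk
  obtain ⟨hk2, hkn⟩ := Finset.mem_Icc.mp hk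
  exact hmono 1 k le_rfl (by omega) hkn

/-- Edges e_1,...,e_n with nondecreasing positive weights w and nonnegative
coefficients c, where index 1 carries a negative coefficient: if for every
prefix c_1·w_1 ≥ Σ_{2 ≤ k ≤ r} c_k·w_k, then c_1 ≥ Σ_{2 ≤ k ≤ n} c_k. -/
theorem stmt_16 (n : ℕ) (hn : 1 ≤ n) (w c : ℕ → ℝ)
    (hwpos : 0 < w 1)
    (hmono : ∀ i j, 1 ≤ i → i ≤ j → j ≤ n → w i ≤ w j)
    (hc : ∀ k, 0 ≤ c k)
    (hprefix : ∀ r, r ≤ n → (∑ k ∈ Finset.Icc 2 r, c k * w k) ≤ c 1 * w 1) :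
    (∑ k ∈ Finset.Icc 2 n, c k) ≤ c 1 :=
  stmt_16_general n w c hwpos hmono hc hprefix
end
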